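/- Let γ̄ ∈ (0, π/2), L > 0, and let α > 0, β ≥ 0, v̲ ≥ 0, ā_θ be real numbers satisfying α² ≤ (4 tan γ̄ / L) β and ā_θ ≤ α v̲ − β. Then ā_θ ≤ (tan γ̄ / L) v̲². -/
import Mathlib

theorem stmt_0 (γbar L α β vlo abarθ : ℝ)
    (hγ : γbar ∈ Set.Ioo 0 (Real.pi / 2)) (hL : 0 < L)
    (hα : 0 < α) (hβ : 0 ≤ β) (hv : 0 ≤ vlo)
    (hdisc : α ^ 2 ≤ (4 * Real.tan γbar / L) * β)
    (ha : abarθ ≤ α * vlo - β) :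
    abarθ ≤ (Real.tan γbar / L) * vlo ^ 2 := by
  have ht : 0 < Real.tan γbar := Real.tan_pos_of_pos_of_lt_pi_div_two hγ.1 hγ.2
  have hd : α ^ 2 * L ≤ 4 * Real.tan γbar * β := by
    have := mul_le_mul_of_nonneg_right hdisc hL.le
    field_simp at this
    linarith
  rw [div_mul_eq_mul_div, le_div_iff₀ hL]
  nlinarith [sq_nonneg (2 * Real.tan γbar * vlo - L * α), mul_pos ht hL, sq_nonneg vlo]
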